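/- arXiv:2403.16762 — 10 statements merged into one kernel-verified Lean document; each statement's English description precedes it below -/
import Mathlib

section
/- In any involutive BE algebra X, for all x1, x2, y1, y2 in X: (x1 → y1*)* → (x2 → y2*) = (x1 → x2*)* → (y1 → y2*). -/
class InvBE (X : Type*) where
  imp : X → X → X
  one : X
  zero : X
  imp_self : ∀ x, imp x x = one
  imp_one : ∀ x, imp x one = one
  one_imp : ∀ x, imp one x = x
  exch : ∀ x y z, imp x (imp y z) = imp y (imp x z)
  zero_imp : ∀ x, imp zero x = one
  invol : ∀ x, imp (imp x zero) zero = x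

namespace InvBE

variable {X : Type*} [InvBE X]

/-- `x* = x → 0` -/
def star (x : X) : X := imp x zero

/-- `x ⊔ y = (x → y) → y` -/
def sup (x y : X) : X := imp (imp x y) y

/-- `x ⊓ y = ((x* → y*) → y*)*` -/
def inf (x y : X) : X := star (imp (imp (star x) (star y)) (star y))

/-- `x ≤_L y` iff `x = (x → y*)*` -/
def leL (x y : X) : Prop := x = star (imp x (star y))

/-- `x ≤_Q y` iff `x = x ⊓ y` -/
def leQ (x y : X) : Prop := x = inf x y

/-- `x C y` iff `x = (x → y*) → (x → y)*` -/
def Comm (x y : X) : Prop := x = imp (imp x (star y)) (star (imp x y))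

/-- divisibility condition for the pair `(x, y)`: `x → (x → y)* = x → y*` -/
def Idiv (x y : X) : Prop := imp x (star (imp x y)) = imp x (star y)

/-- `Idis₁`: `((x* → y) → z*)* = (x → z*) → (y → z*)*` -/
def Idis1 (x y z : X) : Prop :=
  star (imp (imp (star x) y) (star z)) = imp (imp x (star z)) (star (imp y (star z)))

/-- `Idis₂`: `((x → y*) → z)* = (z* → x) → (z* → y)*` -/
def Idis2 (x y z : X) : Prop :=
  star (imp (imp x (star y)) z) = imp (imp (star z) x) (star (imp (star z) y))

/-- a triple is distributive if all its permutations satisfy `Idis₁` and `Idis₂` -/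
def DistribTriple (x y z : X) : Prop :=
  Idis1 x y z ∧ Idis1 x z y ∧ Idis1 y x z ∧ Idis1 y z x ∧ Idis1 z x y ∧ Idis1 z y x ∧
  Idis2 x y z ∧ Idis2 x z y ∧ Idis2 y x z ∧ Idis2 y z x ∧ Idis2 z x y ∧ Idis2 z y x

end InvBE

/-- implicative involutive BE algebra: `(x → y) → x = x` -/
class ImplInvBE (X : Type*) extends InvBE X where
  impl : ∀ x y, imp (imp x y) x = x

/-- implicative-orthomodular lattice: `x ⊓ (y → x) = x` -/
class IOML (X : Type*) extends ImplInvBE X where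
  iom : ∀ x y, InvBE.inf x (imp y x) = x

open InvBE


lemma derived {X : Type*} [InvBE X] (x y z : X) :
    imp (imp (imp x y) zero) z = imp x (imp (imp y zero) z) := by
  calc imp (imp (imp x y) zero) z
      = imp (imp (imp x y) zero) (imp (imp z zero) zero) := by rw [InvBE.invol]
    _ = imp (imp z zero) (imp (imp (imp x y) zero) zero) := InvBE.exch _ _ _
    _ = imp (imp z zero) (imp x y) := by rw [InvBE.invol]
    _ = imp x (imp (imp z zero) y) := InvBE.exch _ _ _
    _ = imp x (imp (imp z zero) (imp (imp y zero) zero)) := by rw [InvBE.invol]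
    _ = imp x (imp (imp y zero) (imp (imp z zero) zero)) := by rw [InvBE.exch (imp z zero)]
    _ = imp x (imp (imp y zero) z) := by rw [InvBE.invol]

theorem stmt0 {X : Type*} [InvBE X] (x1 x2 y1 y2 : X) :
    imp (star (imp x1 (star y1))) (imp x2 (star y2)) =
      imp (star (imp x1 (star x2))) (imp y1 (star y2)) := by
  simp only [InvBE.star]
  rw [derived x1 (imp y1 zero), InvBE.invol y1, derived x1 (imp x2 zero),
    InvBE.invol x2, InvBE.exch y1 x2]
end

section
/- In any involutive BE algebra X, if z ≤_L x and z ≤_L y then z ≤_L (x → y*)*. -/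
open InvBE

theorem stmt2 {X : Type*} [InvBE X] (x y z : X)
    (hx : leL z x) (hy : leL z y) : leL z (star (imp x (star y))) := by
  have ss : ∀ a : X, star (star a) = a := fun a => invol a
  unfold leL at *
  rw [ss]
  -- from hy: imp z (star y) = star z
  have hy' : imp z (star y) = star z := by
    have := congrArg InvBE.star hy
    rw [ss] at this
    exact this.symm
  have key : imp z (imp x (star y)) = imp x (star z) := by
    rw [exch, hy']
  rw [key]
  -- need z = star (imp x (star z)); show imp x (star z) = star z
  have hx' : imp z (star x) = star z := by
    have := congrArg InvBE.star hx
    rw [ss] at this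
    exact this.symm
  have : star z = imp x (star z) := by
    conv_lhs => rw [← hx']
    show imp z (imp x zero) = imp x (imp z zero)
    exact exch z x zero
  rw [← this, ss]
end

section
/- In any implicative involutive BE algebra X, the relation ≤_Q implies ≤_L; that is, if x ⊓ y = x then x = (x → y*)*, where x ⊓ y = ((x* → y*) → y*)*. -/
open InvBE

theorem stmt4 {X : Type*} [ImplInvBE X] (x y : X)
    (h : inf x y = x) : x = star (imp x (star y)) := by
  simp only [inf, InvBE.star] at h ⊢
  have inv := fun a : X => InvBE.invol a
  have ex := fun a b c : X => InvBE.exch a b c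
  have h1 : imp (imp (imp x zero) (imp y zero)) (imp y zero) = imp x zero := by
    have := congrArg (fun t => imp t zero) h
    simp only [InvBE.invol] at this
    exact this
  have e1 : imp (imp x zero) (imp y zero) = imp y x := by
    rw [ex, inv]
  rw [e1] at h1
  have e2 : imp y (imp y zero) = imp y zero := by
    have := ImplInvBE.impl (imp y zero) zero
    rwa [inv] at this
  have e3 : imp x (imp y zero) = imp x zero := by
    rw [ex]
    calc imp y (imp x zero) = imp y (imp (imp y x) (imp y zero)) := by rw [h1]
      _ = imp (imp y x) (imp y (imp y zero)) := ex ..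
      _ = imp (imp y x) (imp y zero) := by rw [e2]
      _ = imp x zero := h1
  rw [e3, inv]
end

section
/- In any involutive BE algebra X, the three conditions (IOM): x ⊓ (y → x) = x, (IOM'): x ⊓ (x* → y) = x, and (IOM''): x ⊔ (x → y)* = x are pairwise equivalent (as universally quantified identities). -/
open InvBE

section Aux
variable {X : Type*} [InvBE X]

lemma sstar (a : X) : InvBE.star (InvBE.star a) = a := InvBE.invol a

lemma contra (a b : X) : InvBE.imp a b = InvBE.imp (InvBE.star b) (InvBE.star a) := by
  conv_lhs => rw [← sstar b]
  rw [InvBE.star, InvBE.star, InvBE.star, InvBE.exch]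

end Aux

theorem stmt5 {X : Type*} [InvBE X] :
    ((∀ x y : X, inf x (imp y x) = x) ↔ (∀ x y : X, inf x (imp (star x) y) = x)) ∧
    ((∀ x y : X, inf x (imp (star x) y) = x) ↔ (∀ x y : X, sup x (star (imp x y)) = x)) := by
  constructor
  · constructor
    · intro h x y
      rw [contra (InvBE.star x) y, sstar]
      exact h x (InvBE.star y)
    · intro h x y
      rw [contra y x]
      exact h x (InvBE.star y)
  · constructor
    · intro h x y
      have := h (InvBE.star x) y
      rw [sstar] at this
      have := congrArg InvBE.star this
      rw [sstar] at this
      simpa [inf, sup, sstar] using this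
    · intro h x y
      have := h (InvBE.star x) y
      have := congrArg InvBE.star this
      rw [sstar] at this
      simpa [inf, sup, sstar] using this
end

section
/- An implicative involutive BE algebra X is an implicative-orthomodular lattice (i.e., satisfies x ⊓ (y → x) = x for all x, y) if and only if for all x, y in X, x ≤_L y implies x ≤_Q y. -/
open InvBE

section Aux
variable {X : Type*} [InvBE X]

lemma BEstar_star (x : X) : InvBE.star (InvBE.star x) = x := InvBE.invol x

lemma BEstar_inj {a b : X} (h : InvBE.star a = InvBE.star b) : a = b := by
  rw [← BEstar_star a, h, BEstar_star]

lemma BEcontrap (x y : X) : imp x (InvBE.star y) = imp y (InvBE.star x) :=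
  InvBE.exch x y InvBE.zero

lemma BEimp_eq_star (x y : X) : imp x y = imp (InvBE.star y) (InvBE.star x) := by
  conv_lhs => rw [← BEstar_star y]
  exact BEcontrap x (InvBE.star y)

end Aux

theorem stmt6 {X : Type*} [ImplInvBE X] :
    (∀ x y : X, inf x (imp y x) = x) ↔ (∀ x y : X, leL x y → leQ x y) := by
  constructor
  · intro iom x y hL
    unfold leL at hL
    have hst : InvBE.star x = imp x (InvBE.star y) := by
      conv_lhs => rw [hL, BEstar_star]
    -- Step 1: (y → x) → x = y
    have h1 : imp (imp y x) x = y := by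
      have h := iom (InvBE.star y) x
      unfold inf at h
      rw [← hst, BEstar_star, BEstar_star] at h
      exact BEstar_inj h
    -- Step 2: iom at (x, y → x)
    have h2 := iom x (imp y x)
    unfold inf at h2
    rw [h1] at h2
    unfold leQ inf
    exact h2.symm
  · intro h x y
    have hL : leL x (imp y x) := by
      unfold leL
      rw [BEcontrap x (imp y x), BEimp_eq_star y x, ImplInvBE.impl, BEstar_star]
    exact (h x (imp y x) hL).symm
end

section
/- In any implicative-orthomodular lattice X, the relations ≤_Q and ≤_L coincide: x ⊓ y = x if and only if x = (x → y*)*. -/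
open InvBE

section Aux

variable {X : Type*} [IOML X]

lemma my_ss (u : X) : star (star u) = u := InvBE.invol u

lemma my_star_inj {u v : X} (h : star u = star v) : u = v := by
  rw [← my_ss u, ← my_ss v, h]

lemma my_contra (u v : X) : imp u (star v) = imp v (star u) := by
  simp only [InvBE.star]; exact InvBE.exch u v InvBE.zero

lemma my_contra' (u v : X) : imp u v = imp (star v) (star u) := by
  rw [← my_contra u (star v), my_ss]

lemma my_sb_b (b : X) : imp (star b) b = b := by
  simp only [InvBE.star]; exact ImplInvBE.impl b InvBE.zero

lemma my_key (u c : X) : imp (imp u (star (imp u c))) (star (imp u c)) = u := by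
  have h := IOML.iom (star u) (star c)
  simp only [inf] at h
  rw [← my_contra' u c, my_ss] at h
  exact my_star_inj h

lemma my_hard {a b : X} (h : imp (star b) a = a) : imp (imp a b) b = a := by
  have k := my_key (star b) a
  rw [h, ← my_contra' a b] at k
  have L3 := my_key a b
  have e : imp a (star (imp a b)) = star b := by rw [my_contra a (imp a b), k]
  rw [e] at L3
  rw [my_contra' (imp a b) b]
  exact L3

end Aux

theorem stmt7 {X : Type*} [IOML X] (x y : X) :
    inf x y = x ↔ x = star (imp x (star y)) := by
  constructor
  · intro hQ
    simp only [inf] at hQ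
    have h2 : imp (imp (star x) (star y)) (star y) = star x := by
      rw [← my_ss (imp (imp (star x) (star y)) (star y)), hQ]
    have h3 : imp (star (star y)) (star x) = star x := by
      calc imp (star (star y)) (star x)
          = imp (star (star y)) (imp (imp (star x) (star y)) (star y)) := by rw [h2]
        _ = imp (imp (star x) (star y)) (imp (star (star y)) (star y)) :=
            InvBE.exch _ _ _
        _ = imp (imp (star x) (star y)) (star y) := by rw [my_sb_b]
        _ = star x := h2
    rw [my_ss] at h3
    have : imp x (star y) = star x := by rw [my_contra x y, h3]
    rw [this, my_ss]
  · intro hL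
    have h : imp (star (star y)) (star x) = star x := by
      rw [my_ss, ← my_contra x y]
      conv_rhs => rw [hL, my_ss]
    have k := my_hard (b := star y) h
    simp only [inf]
    rw [k, my_ss]
end

section
/- An implicative involutive BE algebra X is an implicative-orthomodular lattice if and only if it satisfies the identity x → (x ⊓ y) = x → y for all x, y. -/
open InvBE

section Aux

variable {X : Type*} [ImplInvBE X]

open InvBE ImplInvBE

local infixr:60 " ⇾ " => InvBE.imp
local notation "𝟭" => InvBE.one (X := X)

private lemma ss (x : X) : star (star x) = x := invol x

private lemma ctp (x y : X) : x ⇾ star y = y ⇾ star x := exch x y zero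

private lemma d2 (x y : X) : x ⇾ y = star y ⇾ star x := by
  conv_lhs => rw [← ss y]
  exact ctp x (star y)

/-- `F`: `(c → d) → d* = d*` -/
private lemma Flem (c d : X) : (c ⇾ d) ⇾ star d = star d := by
  rw [d2 c d]; exact impl (star d) (star c)

/-- from `Hp` (the unfolded IOM condition), the goal identity in `a b` form. -/
private lemma Glem (hp : ∀ x y : X, ((y ⇾ x) ⇾ x) ⇾ star (y ⇾ x) = star x)
    (a b : X) : ((a ⇾ b) ⇾ b) ⇾ a = b ⇾ a := by
  have key : star a ⇾ star (a ⇾ b) = a := (d2 (a ⇾ b) a).symm.trans (impl a b)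
  calc ((a ⇾ b) ⇾ b) ⇾ a
      = ((a ⇾ b) ⇾ b) ⇾ (star a ⇾ star (a ⇾ b)) :=
        congrArg (fun z => ((a ⇾ b) ⇾ b) ⇾ z) key.symm
    _ = star a ⇾ (((a ⇾ b) ⇾ b) ⇾ star (a ⇾ b)) := exch _ _ _
    _ = star a ⇾ star b := by rw [hp b a]
    _ = b ⇾ a := (d2 b a).symm

private lemma swap (hG2 : ∀ a b : X, ((a ⇾ b) ⇾ b) ⇾ a = b ⇾ a)
    {z w : X} (h : z ⇾ w = w) : w ⇾ z = z := by
  have h2 := hG2 z w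
  rw [h, InvBE.imp_self, InvBE.one_imp] at h2
  exact h2.symm

private lemma revmain (hG2 : ∀ a b : X, ((a ⇾ b) ⇾ b) ⇾ a = b ⇾ a) (x y : X) :
    (y ⇾ x) ⇾ star ((y ⇾ x) ⇾ x) = star x := by
  have hA : x ⇾ ((y ⇾ x) ⇾ star ((y ⇾ x) ⇾ x)) = star x := by
    calc x ⇾ ((y ⇾ x) ⇾ star ((y ⇾ x) ⇾ x))
        = (y ⇾ x) ⇾ (x ⇾ star ((y ⇾ x) ⇾ x)) := exch _ _ _
      _ = (y ⇾ x) ⇾ (((y ⇾ x) ⇾ x) ⇾ star x) := by rw [ctp x ((y ⇾ x) ⇾ x)]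
      _ = (y ⇾ x) ⇾ star x := by rw [Flem (y ⇾ x) x]
      _ = star x := Flem y x
  have hAux : star x ⇾ ((y ⇾ x) ⇾ star ((y ⇾ x) ⇾ x)) = 𝟭 := by
    calc star x ⇾ ((y ⇾ x) ⇾ star ((y ⇾ x) ⇾ x))
        = (y ⇾ x) ⇾ (star x ⇾ star ((y ⇾ x) ⇾ x)) := exch _ _ _
      _ = (y ⇾ x) ⇾ (((y ⇾ x) ⇾ x) ⇾ star (star x)) := by
          rw [ctp (star x) ((y ⇾ x) ⇾ x)]
      _ = (y ⇾ x) ⇾ (((y ⇾ x) ⇾ x) ⇾ x) := by rw [ss]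
      _ = ((y ⇾ x) ⇾ x) ⇾ ((y ⇾ x) ⇾ x) := exch _ _ _
      _ = 𝟭 := imp_self _
  have hB : ((y ⇾ x) ⇾ star ((y ⇾ x) ⇾ x)) ⇾ x = x := by
    have h2 := hG2 x ((y ⇾ x) ⇾ star ((y ⇾ x) ⇾ x))
    rw [hA, hAux, InvBE.one_imp] at h2
    exact h2.symm
  have h3 := swap hG2 hB
  rw [hA] at h3
  exact h3.symm

end Aux

theorem stmt9 {X : Type*} [ImplInvBE X] :
    (∀ x y : X, inf x (imp y x) = x) ↔ (∀ x y : X, imp x (inf x y) = imp x y) := by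
  constructor
  · intro hH x y
    have hp : ∀ x y : X, imp (imp (imp y x) x) (InvBE.star (imp y x)) = InvBE.star x := by
      intro x y
      have h := congrArg InvBE.star (hH x y)
      unfold inf at h
      rw [ss] at h
      rw [← d2 (imp y x) x] at h
      exact h
    unfold inf
    rw [ctp x (imp (imp (InvBE.star x) (InvBE.star y)) (InvBE.star y))]
    rw [Glem hp (InvBE.star x) (InvBE.star y)]
    exact (d2 x y).symm
  · intro hG x y
    have hG2 : ∀ a b : X, imp (imp (imp a b) b) a = imp b a := by
      intro a b
      have h := hG (InvBE.star a) (InvBE.star b)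
      unfold inf at h
      rw [ss, ss] at h
      rw [ctp (InvBE.star a) (imp (imp a b) b), ss] at h
      rw [← d2 b a] at h
      exact h
    unfold inf
    rw [← d2 (imp y x) x]
    rw [ctp (imp (imp y x) x) (imp y x)]
    rw [revmain hG2 x y]
    exact ss x
end

section
/- In an implicative involutive BE algebra X, if x ≤_L y or x ≤_L y* then x commutes with y (xCy), where xCy means x = (x → y*) → (x → y)*. -/
open InvBE

lemma contrap {X : Type*} [InvBE X] (a b : X) :
    imp a (InvBE.star b) = imp b (InvBE.star a) := by
  unfold InvBE.star; exact InvBE.exch a b InvBE.zero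

lemma invbe_sstar {X : Type*} [InvBE X] (a : X) : InvBE.star (InvBE.star a) = a := by
  unfold InvBE.star; exact InvBE.invol a

theorem stmt10 {X : Type*} [ImplInvBE X] (x y : X)
    (h : leL x y ∨ leL x (star y)) : Comm x y := by
  unfold Comm
  rcases h with h | h
  · unfold leL at h
    have hs := congrArg InvBE.star h
    rw [invbe_sstar] at hs
    rw [← hs, contrap, invbe_sstar, ImplInvBE.impl]
  · unfold leL at h
    rw [invbe_sstar] at h
    have hs := congrArg InvBE.star h
    rw [invbe_sstar] at hs
    rw [← hs, invbe_sstar, ImplInvBE.impl]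
end

section
/- (Foulis-Holland theorem for IOMLs) In an implicative-orthomodular lattice X, if zCx and zCy, then ((x* → y) → z*)* = (x → z*) → (y → z*)* and ((z* → x) → y*)* = (z → y*) → (x → y*)*; in fact the triple (x, y, z) is distributive, i.e., all six permutations satisfy the corresponding distributivity identities Idis₁: ((a* → b) → c*)* = (a → c*) → (b → c*)* and Idis₂: ((a → b*) → c)* = (c* → a) → (c* → b)*. -/
open InvBE

namespace FHL

variable {X : Type*} [IOML X]

/-- join -/
def jo (a b : X) : X := imp (star a) b
/-- meet -/
def me (a b : X) : X := star (imp a (star b))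
/-- order -/
def le (a b : X) : Prop := jo a b = b

lemma star_star (a : X) : star (star a) = a := invol a

lemma cp (a b : X) : imp a b = imp (star b) (star a) := by
  conv_lhs => rw [← invol b]
  rw [exch]
  exact rfl

lemma jo_comm (a b : X) : jo a b = jo b a := by
  show imp (star a) b = imp (star b) a
  rw [cp (star a) b, star_star]

lemma jo_idem (a : X) : jo a a = a := ImplInvBE.impl a zero

lemma jo_assoc (a b c : X) : jo (jo a b) c = jo a (jo b c) := by
  show imp (star (jo a b)) c = imp (star a) (jo b c)
  rw [cp (star (jo a b)) c, star_star]
  show imp (star c) (imp (star a) b) = imp (star a) (jo b c)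
  rw [exch]
  show imp (star a) (jo c b) = imp (star a) (jo b c)
  rw [jo_comm c b]

lemma jo_left_comm (a b c : X) : jo a (jo b c) = jo b (jo a c) := by
  rw [← jo_assoc, jo_comm a b, jo_assoc]

lemma star_jo (a b : X) : star (jo a b) = me (star a) (star b) := by
  show star (imp (star a) b) = star (imp (star a) (star (star b)))
  rw [star_star]

lemma star_me (a b : X) : star (me a b) = jo (star a) (star b) := by
  show star (star (imp a (star b))) = imp (star (star a)) (star b)
  rw [star_star, star_star]

lemma me_comm (a b : X) : me a b = me b a := by
  show star (imp a (star b)) = star (imp b (star a))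
  rw [cp a (star b), star_star]

lemma me_idem (a : X) : me a a = a := by
  have h := congrArg (InvBE.star) (jo_idem (star a))
  rw [star_jo, star_star] at h
  exact h

lemma me_assoc (a b c : X) : me (me a b) c = me a (me b c) := by
  have h := congrArg (InvBE.star) (jo_assoc (star a) (star b) (star c))
  simp only [star_jo, star_star] at h
  exact h

lemma me_left_comm (a b c : X) : me a (me b c) = me b (me a c) := by
  rw [← me_assoc, me_comm a b, me_assoc]

lemma absorb1 (a b : X) : jo a (me a b) = a := by
  have h : star (me a b) = imp a (star b) := by
    rw [star_me]
    show imp (star (star a)) (star b) = _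
    rw [star_star]
  show imp (star a) (me a b) = a
  rw [cp (star a) (me a b), star_star, h]
  exact ImplInvBE.impl a (star b)

lemma absorb2 (a b : X) : me a (jo a b) = a := by
  have h := congrArg (InvBE.star) (absorb1 (star a) (star b))
  simp only [star_jo, star_me, star_star] at h
  exact h

lemma le_refl (a : X) : le a a := jo_idem a

lemma le_of_me {a b : X} (h : me a b = a) : le a b := by
  have h2 : me b a = a := (me_comm b a).trans h
  show jo a b = b
  rw [← h2, jo_comm]
  exact absorb1 b a

lemma me_of_le {a b : X} (h : le a b) : me a b = a := by
  have h' : jo a b = b := h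
  rw [← h']
  exact absorb2 a b

lemma le_trans {a b c : X} (h1 : le a b) (h2 : le b c) : le a c := by
  have h1' : jo a b = b := h1
  have h2' : jo b c = c := h2
  show jo a c = c
  rw [← h2', ← jo_assoc, h1']

lemma le_antisymm {a b : X} (h1 : le a b) (h2 : le b a) : a = b := by
  have h1' : jo a b = b := h1
  have h2' : jo b a = a := h2
  calc a = jo b a := h2'.symm
    _ = jo a b := jo_comm b a
    _ = b := h1'

lemma le_jo_left (a b : X) : le a (jo a b) := by
  show jo a (jo a b) = jo a b
  rw [← jo_assoc, jo_idem]

lemma le_jo_right (a b : X) : le b (jo a b) := by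
  show jo b (jo a b) = jo a b
  rw [jo_left_comm, jo_idem]

lemma le_me_left (a b : X) : le (me a b) a := by
  apply le_of_me
  rw [me_comm a b, me_assoc, me_idem, me_comm]

lemma le_me_right (a b : X) : le (me a b) b := by
  apply le_of_me
  rw [me_assoc, me_idem]

lemma le_jo_lub {a b c : X} (h1 : le a c) (h2 : le b c) : le (jo a b) c := by
  have h1' : jo a c = c := h1
  have h2' : jo b c = c := h2
  show jo (jo a b) c = c
  rw [jo_assoc, h2', h1']

lemma le_me_glb {a b c : X} (h1 : le c a) (h2 : le c b) : le c (me a b) := by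
  apply le_of_me
  rw [← me_assoc, me_of_le h1, me_of_le h2]

lemma jo_le {u v : X} (h : le u v) : jo v u = v := by
  rw [jo_comm]; exact h

lemma le_star_mono {a b : X} (h : le a b) : le (star b) (star a) := by
  have h' := congrArg (InvBE.star) (me_of_le h)
  rw [star_me] at h'
  show jo (star b) (star a) = star a
  rw [jo_comm]; exact h'

lemma star_zero : star (zero : X) = one := zero_imp zero

lemma star_one : star (one : X) = zero := one_imp zero

lemma jo_zero (a : X) : jo a zero = a := invol a

lemma me_zero (a : X) : me a zero = zero := by
  show star (imp a (star zero)) = zero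
  rw [star_zero, InvBE.imp_one]
  exact star_one

lemma me_zero_left (a : X) : me zero a = zero := by
  rw [me_comm]; exact me_zero a

lemma me_star_self (a : X) : me a (star a) = zero := by
  show star (imp a (star (star a))) = zero
  rw [star_star, InvBE.imp_self]
  exact star_one

lemma imp_eq_jo (a b : X) : imp a b = jo (star a) b := by
  show imp a b = imp (star (star a)) b
  rw [star_star]

lemma inf_eq (x q : X) : inf x q = me (jo x (star q)) q := rfl

lemma om0 {b x : X} (h : le b (star x)) : me (jo x b) (star b) = x := by
  have h1 : me b (star x) = b := me_of_le h
  have h2 : imp b x = star b := by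
    have h3 := congrArg (InvBE.star) h1
    rw [star_me, star_star] at h3
    rw [imp_eq_jo]
    exact h3
  have h4 := IOML.iom x b
  rw [inf_eq, h2, star_star] at h4
  exact h4

lemma om {a c : X} (h : le a c) : jo a (me c (star a)) = c := by
  have h' : le a (star (star c)) := by rw [star_star]; exact h
  have h0 := om0 h'
  have h1 := congrArg (InvBE.star) h0
  rw [star_me, star_jo, star_star, star_star] at h1
  rw [jo_comm] at h1
  exact h1

lemma domm {a c : X} (h : le c a) : me a (jo (star a) c) = c := by
  have h1 := om (le_star_mono h)
  rw [star_star] at h1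
  have h2 := congrArg (InvBE.star) h1
  rw [star_jo, star_me, star_star, star_star] at h2
  rw [jo_comm c (star a)] at h2
  exact h2

/-- lattice-language commutation -/
def CommL (a b : X) : Prop := a = jo (me a b) (me a (star b))

lemma comm_to {a b : X} (h : Comm a b) : CommL a b := by
  have e1 : star (me a b) = imp a (star b) := star_star _
  have e2 : me a (star b) = star (imp a b) := by
    show star (imp a (star (star b))) = star (imp a b)
    rw [star_star]
  show a = imp (star (me a b)) (me a (star b))
  rw [e1, e2]
  exact h

lemma comm_star_right {a b : X} (h : CommL a b) : CommL a (star b) := by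
  show a = jo (me a (star b)) (me a (star (star b)))
  rw [star_star, jo_comm]
  exact h

lemma comm_symm {a b : X} (h : CommL a b) : CommL b a := by
  have h' : a = jo (me a b) (me a (star b)) := h
  have hb : jo (me a b) (me b (star (me a b))) = b := om (le_me_right a b)
  have hka : le (me b (star (me a b))) (star a) := by
    have h1 : le (me b (star (me a b))) (star (me a b)) := le_me_right _ _
    have hd : star (me a (star b)) = jo (star a) b := by rw [star_me, star_star]
    have h2 : le (me b (star (me a b))) (star (me a (star b))) := by
      rw [hd]
      exact le_trans (le_me_left _ _) (le_jo_right _ _)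
    have e2 : star a = me (star (me a b)) (star (me a (star b))) := by
      conv_lhs => rw [h']
      exact star_jo _ _
    rw [e2]
    exact le_me_glb h1 h2
  have k1 : le (me b (star (me a b))) (me b (star a)) :=
    le_me_glb (le_me_left _ _) hka
  have k2 : le (me b (star a)) (me b (star (me a b))) := by
    apply le_me_glb (le_me_left _ _)
    rw [star_me]
    exact le_trans (le_me_right _ _) (le_jo_left _ _)
  have hk := le_antisymm k1 k2
  show b = jo (me b a) (me b (star a))
  calc b = jo (me a b) (me b (star (me a b))) := hb.symm
    _ = jo (me b a) (me b (star a)) := by rw [hk, me_comm a b]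

lemma comm_star_left {a b : X} (h : CommL a b) : CommL (star a) b :=
  comm_symm (comm_star_right (comm_symm h))

lemma kal {a b : X} (h : CommL a b) : me a (jo (star a) b) = me a b := by
  have hs : b = jo (me b a) (me b (star a)) := comm_symm h
  have e1 : jo (star a) b = jo (star a) (me a b) := by
    conv_lhs => rw [hs]
    rw [jo_left_comm, jo_le (le_me_right b (star a)),
        jo_comm (me b a) (star a), me_comm b a]
  rw [e1]
  exact domm (le_me_left a b)

lemma fh1 {a b c : X} (ha : CommL c a) (hb : CommL c b) :
    me (jo a b) c = jo (me a c) (me b c) := by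
  have hfe : le (jo (me a c) (me b c)) (me (jo a b) c) :=
    le_jo_lub
      (le_me_glb (le_trans (le_me_left a c) (le_jo_left a b)) (le_me_right a c))
      (le_me_glb (le_trans (le_me_left b c) (le_jo_right a b)) (le_me_right b c))
  have k1 : me c (jo (star c) (star a)) = me c (star a) := kal (comm_star_right ha)
  have k2 : me c (jo (star c) (star b)) = me c (star b) := kal (comm_star_right hb)
  have hzero : me (me (jo a b) c) (star (jo (me a c) (me b c))) = zero := by
    calc me (me (jo a b) c) (star (jo (me a c) (me b c)))
        = me (me (jo a b) c) (me (jo (star a) (star c)) (jo (star b) (star c))) := by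
          simp only [star_jo, star_me]
      _ = me (jo a b) (me (me c (jo (star c) (star a))) (jo (star b) (star c))) := by
          simp only [me_comm, me_left_comm, me_assoc, jo_comm]
      _ = me (jo a b) (me (me c (star a)) (jo (star b) (star c))) := by rw [k1]
      _ = me (jo a b) (me (star a) (me c (jo (star c) (star b)))) := by
          simp only [me_comm, me_left_comm, me_assoc, jo_comm]
      _ = me (jo a b) (me (star a) (me c (star b))) := by rw [k2]
      _ = me (me (jo a b) (star (jo a b))) c := by
          simp only [star_jo, me_comm, me_left_comm, me_assoc]
      _ = zero := by rw [me_star_self, me_zero_left]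
  have hfin := om hfe
  rw [hzero, jo_zero] at hfin
  exact hfin.symm

lemma fh2 {a b c : X} (ha : CommL c a) (hb : CommL c b) :
    me (jo a c) b = jo (me a b) (me c b) := by
  have hfe : le (jo (me a b) (me c b)) (me (jo a c) b) :=
    le_jo_lub
      (le_me_glb (le_trans (le_me_left a b) (le_jo_left a c)) (le_me_right a b))
      (le_me_glb (le_trans (le_me_left c b) (le_jo_right a c)) (le_me_right c b))
  have k1 : me b (jo (star b) (star c)) = me b (star c) :=
    kal (comm_star_right (comm_symm hb))
  have k2 : me (star c) (jo c a) = me (star c) a := by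
    have h := kal (comm_star_left ha)
    rw [star_star] at h
    exact h
  have hzero : me (me (jo a c) b) (star (jo (me a b) (me c b))) = zero := by
    calc me (me (jo a c) b) (star (jo (me a b) (me c b)))
        = me (me (jo a c) b) (me (jo (star a) (star b)) (jo (star c) (star b))) := by
          simp only [star_jo, star_me]
      _ = me (jo a c) (me (me b (jo (star b) (star c))) (jo (star a) (star b))) := by
          simp only [me_comm, me_left_comm, me_assoc, jo_comm]
      _ = me (jo a c) (me (me b (star c)) (jo (star a) (star b))) := by rw [k1]
      _ = me (me (star c) (jo c a)) (me b (jo (star a) (star b))) := by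
          simp only [me_comm, me_left_comm, me_assoc, jo_comm]
      _ = me (me (star c) a) (me b (jo (star a) (star b))) := by rw [k2]
      _ = me (me (me a b) (star (me a b))) (star c) := by
          simp only [star_me, me_comm, me_left_comm, me_assoc]
      _ = zero := by rw [me_star_self, me_zero_left]
  have hfin := om hfe
  rw [hzero, jo_zero] at hfin
  exact hfin.symm

lemma idis1_of {a b c : X} (h : me (jo a b) c = jo (me a c) (me b c)) :
    Idis1 a b c := by
  show star (imp (imp (star a) b) (star c)) = imp (imp a (star c)) (star (imp b (star c)))
  have e1 : imp a (star c) = star (me a c) := (star_star _).symm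
  rw [e1]
  exact h

lemma idis2_of {a b c : X} (h : jo (me a b) c = me (jo c a) (jo c b)) :
    Idis2 a b c := by
  show star (imp (imp a (star b)) c) = imp (imp (star c) a) (star (imp (star c) b))
  have e1 : imp a (star b) = star (me a b) := (star_star _).symm
  rw [e1]
  have e2 : imp (imp (star c) a) (star (imp (star c) b))
      = star (me (jo c a) (jo c b)) := (star_star _).symm
  rw [e2]
  exact congrArg (InvBE.star) h

lemma dual_of {a b c : X}
    (h : me (jo (star a) (star b)) (star c) = jo (me (star a) (star c)) (me (star b) (star c))) :
    jo (me a b) c = me (jo c a) (jo c b) := by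
  have h2 := congrArg (InvBE.star) h
  simp only [star_jo, star_me, star_star] at h2
  rw [h2, jo_comm a c, jo_comm b c]

end FHL
/-- Foulis-Holland theorem for implicative-orthomodular lattices -/
theorem stmt16 {X : Type*} [IOML X] (x y z : X)
    (hx : Comm z x) (hy : Comm z y) :
    (star (imp (imp (star x) y) (star z)) = imp (imp x (star z)) (star (imp y (star z)))) ∧
    (star (imp (imp (star z) x) (star y)) = imp (imp z (star y)) (star (imp x (star y)))) ∧
    DistribTriple x y z := by
  open FHL in
  have czx : CommL z x := comm_to hx
  have czy : CommL z y := comm_to hy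
  have czx' : CommL (star z) (star x) := comm_star_left (comm_star_right czx)
  have czy' : CommL (star z) (star y) := comm_star_left (comm_star_right czy)
  have D1 : me (jo x y) z = jo (me x z) (me y z) := fh1 czx czy
  have D2 : me (jo x z) y = jo (me x y) (me z y) := fh2 czx czy
  have D3 : me (jo y z) x = jo (me y x) (me z x) := fh2 czy czx
  have D1s : me (jo (star x) (star y)) (star z)
      = jo (me (star x) (star z)) (me (star y) (star z)) := fh1 czx' czy'
  have D2s : me (jo (star x) (star z)) (star y)
      = jo (me (star x) (star y)) (me (star z) (star y)) := fh2 czx' czy'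
  have D3s : me (jo (star y) (star z)) (star x)
      = jo (me (star y) (star x)) (me (star z) (star x)) := fh2 czy' czx'
  have I1xyz : Idis1 x y z := idis1_of D1
  have I1xzy : Idis1 x z y := idis1_of D2
  have I1yzx : Idis1 y z x := idis1_of D3
  have I1yxz : Idis1 y x z := idis1_of (by
    rw [jo_comm y x, D1, jo_comm (me x z) (me y z)])
  have I1zxy : Idis1 z x y := idis1_of (by
    rw [jo_comm z x, D2, jo_comm (me x y) (me z y)])
  have I1zyx : Idis1 z y x := idis1_of (by
    rw [jo_comm z y, D3, jo_comm (me y x) (me z x)])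
  have I2xyz : Idis2 x y z := idis2_of (dual_of D1s)
  have I2xzy : Idis2 x z y := idis2_of (dual_of D2s)
  have I2yzx : Idis2 y z x := idis2_of (dual_of D3s)
  have I2yxz : Idis2 y x z := idis2_of (dual_of (by
    rw [jo_comm (star y) (star x), D1s, jo_comm (me (star x) (star z)) (me (star y) (star z))]))
  have I2zxy : Idis2 z x y := idis2_of (dual_of (by
    rw [jo_comm (star z) (star x), D2s, jo_comm (me (star x) (star y)) (me (star z) (star y))]))
  have I2zyx : Idis2 z y x := idis2_of (dual_of (by
    rw [jo_comm (star z) (star y), D3s, jo_comm (me (star y) (star x)) (me (star z) (star x))]))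
  exact ⟨I1xyz, I1zxy,
    I1xyz, I1xzy, I1yxz, I1yzx, I1zxy, I1zyx,
    I2xyz, I2xzy, I2yxz, I2yzx, I2zxy, I2zyx⟩
end

section
/- An implicative-orthomodular lattice X is distributive (all triples satisfy both distributivity identities Idis₁ and Idis₂) if and only if X satisfies the divisibility condition x → (x → y)* = x → y* for all x, y. -/
open InvBE

namespace IOMLProof
open InvBE

variable {X : Type*} [IOML X]

set_option linter.unusedSectionVars false

lemma ss (x : X) : InvBE.star (InvBE.star x) = x := InvBE.invol x

lemma star_inj {x y : X} (h : InvBE.star x = InvBE.star y) : x = y := by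
  have h2 := congrArg InvBE.star h; rwa [ss, ss] at h2

/-- `x → y* = y → x*` -/
lemma c0 (x y : X) : imp x (InvBE.star y) = imp y (InvBE.star x) := InvBE.exch x y zero

/-- contraposition -/
lemma contrap (x y : X) : imp x y = imp (InvBE.star y) (InvBE.star x) := by
  rw [c0 (InvBE.star y) x]; rw [ss]

def jn (x y : X) : X := imp (InvBE.star x) y
def mt (x y : X) : X := InvBE.star (imp x (InvBE.star y))

lemma imp_eq_jn (x y : X) : imp x y = jn (InvBE.star x) y := by unfold jn; rw [ss]

lemma jn_flip (x y : X) : jn x y = imp (InvBE.star y) x := by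
  unfold jn; rw [contrap (InvBE.star x) y, ss]

lemma jn_comm (x y : X) : jn x y = jn y x := by
  rw [jn_flip]; rfl

lemma jn_assoc (x y z : X) : jn (jn x y) z = jn x (jn y z) := by
  have h1 : jn (jn x y) z = jn z (jn x y) := jn_comm _ _
  have h2 : jn z (jn x y) = jn x (jn z y) := by
    show imp (InvBE.star z) (imp (InvBE.star x) y) = imp (InvBE.star x) (imp (InvBE.star z) y)
    exact InvBE.exch _ _ _
  rw [h1, h2, jn_comm z y]

lemma mt_comm (x y : X) : mt x y = mt y x := congrArg InvBE.star (c0 x y)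

lemma star_jn (x y : X) : InvBE.star (jn x y) = mt (InvBE.star x) (InvBE.star y) := by
  unfold jn mt; rw [ss]

lemma star_mt (x y : X) : InvBE.star (mt x y) = jn (InvBE.star x) (InvBE.star y) := by
  unfold jn mt; rw [ss, ss]

lemma absorb1 (x y : X) : jn x (mt x y) = x := by
  unfold jn mt
  rw [c0 (InvBE.star x) (imp x (InvBE.star y)), ss]
  exact ImplInvBE.impl x (InvBE.star y)

section
variable (hdiv : ∀ x y : X, imp x (InvBE.star (imp x y)) = imp x (InvBE.star y))
include hdiv

/-- `(x → y) → y = x* → y` -/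
lemma sup_eq (x y : X) : imp (imp x y) y = jn x y := by
  have h1 : imp (imp x y) y = imp (InvBE.star y) (InvBE.star (imp x y)) :=
    contrap (imp x y) y
  rw [h1, contrap x y, hdiv (InvBE.star y) (InvBE.star x), ss, jn_flip]

lemma jn_idem (x : X) : jn x x = x := by
  rw [← sup_eq hdiv x x, InvBE.imp_self, InvBE.one_imp]

lemma inf_eq (x y : X) : inf x y = mt x y := by
  unfold inf mt
  rw [sup_eq hdiv (InvBE.star x) (InvBE.star y)]
  unfold jn; rw [ss]

lemma absorb2 (x y : X) : mt x (jn x y) = x := by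
  rw [jn_flip, ← inf_eq hdiv]
  exact IOML.iom x (InvBE.star y)

def le (x y : X) : Prop := jn x y = y

lemma le_refl (x : X) : le x x := jn_idem hdiv x

omit hdiv in
lemma le_trans {x y z : X} (h1 : le x y) (h2 : le y z) : le x z := by
  unfold le at *
  rw [← h2, ← jn_assoc, h1]

omit hdiv in
lemma le_antisymm {x y : X} (h1 : le x y) (h2 : le y x) : x = y := by
  unfold le at *
  rw [← h1, jn_comm, h2]

lemma le_jn_left' (x y : X) : le x (jn x y) := by
  unfold le; rw [← jn_assoc, jn_idem hdiv]

lemma le_jn_right' (x y : X) : le y (jn x y) := by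
  rw [jn_comm]; exact le_jn_left' hdiv y x

omit hdiv in
lemma sup_le {x y z : X} (h1 : le x z) (h2 : le y z) : le (jn x y) z := by
  unfold le at *; rw [jn_assoc, h2, h1]

omit hdiv in
lemma star_le {x y : X} (h : le x y) : le (InvBE.star y) (InvBE.star x) := by
  unfold le at *
  unfold jn at *
  rw [ss, ← h]
  exact ImplInvBE.impl (InvBE.star x) y

lemma le_mt_left (x y : X) : le (mt x y) x := by
  unfold le; rw [jn_comm]; exact absorb1 x y

lemma le_mt_right (x y : X) : le (mt x y) y := by
  rw [mt_comm]; exact le_mt_left hdiv y x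

omit hdiv in
lemma le_mt {x y z : X} (h1 : le z x) (h2 : le z y) : le z (mt x y) := by
  have h3 : le (jn (InvBE.star x) (InvBE.star y)) (InvBE.star z) := sup_le (star_le h1) (star_le h2)
  have h4 := star_le h3
  rwa [ss, star_jn, ss, ss] at h4

lemma le_sup_mono {a b c d : X} (h1 : le a b) (h2 : le c d) : le (jn a c) (jn b d) :=
  sup_le (le_trans h1 (le_jn_left' hdiv b d)) (le_trans h2 (le_jn_right' hdiv b d))

lemma mt_mono {u v : X} (a : X) (h : le u v) : le (mt a u) (mt a v) :=
  le_mt (le_mt_left hdiv a u) (le_trans (le_mt_right hdiv a u) h)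

/-- `x ⊓ (x* ⊔ y) = x ⊓ y` -/
lemma P (x y : X) : mt x (jn (InvBE.star x) y) = mt x y := by
  unfold jn; rw [ss]
  exact congrArg InvBE.star (hdiv x y)

/-- `x ⊔ (x* ⊓ y) = x ⊔ y` -/
lemma P' (x y : X) : jn x (mt (InvBE.star x) y) = jn x y := by
  apply star_inj
  rw [star_jn, star_jn, star_mt, ss]
  have h : jn x (InvBE.star y) = jn (InvBE.star (InvBE.star x)) (InvBE.star y) := by rw [ss]
  rw [h, P hdiv (InvBE.star x) (InvBE.star y)]

/-- every pair commutes: `(b ⊓ a) ⊔ (b ⊓ a*) = b` -/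
lemma commute (a b : X) : jn (mt b a) (mt b (InvBE.star a)) = b := by
  have step1 : mt (InvBE.star (mt b a)) b = mt b (InvBE.star a) := by
    rw [star_mt, mt_comm]
    exact P hdiv b (InvBE.star a)
  rw [← step1, P' hdiv (mt b a) b, jn_comm, absorb1]

/-- Foulis–Holland: `a ⊓ (b ⊔ c) = (a ⊓ b) ⊔ (a ⊓ c)` -/
lemma FH (a b c : X) : mt a (jn b c) = jn (mt a b) (mt a c) := by
  set d := jn (mt a b) (mt a c) with hd
  have hdle : le d (mt a (jn b c)) := by
    apply le_mt
    · exact sup_le (le_mt_left hdiv a b) (le_mt_left hdiv a c)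
    · exact sup_le (le_trans (le_mt_right hdiv a b) (le_jn_left' hdiv b c))
        (le_trans (le_mt_right hdiv a c) (le_jn_right' hdiv b c))
  have hb : le b (jn d (InvBE.star a)) := by
    have h1 : le (mt b a) d := by
      rw [mt_comm]; exact le_jn_left' hdiv (mt a b) (mt a c)
    have h2 : le (mt b (InvBE.star a)) (InvBE.star a) := le_mt_right hdiv b (InvBE.star a)
    have h3 := le_sup_mono hdiv h1 h2
    rwa [commute hdiv a b] at h3
  have hc : le c (jn d (InvBE.star a)) := by
    have h1 : le (mt c a) d := by
      rw [mt_comm]; exact le_jn_right' hdiv (mt a b) (mt a c)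
    have h2 : le (mt c (InvBE.star a)) (InvBE.star a) := le_mt_right hdiv c (InvBE.star a)
    have h3 := le_sup_mono hdiv h1 h2
    rwa [commute hdiv a c] at h3
  have hbc : le (jn b c) (jn d (InvBE.star a)) := sup_le hb hc
  have h4 : le (mt a (jn b c)) (mt a (jn d (InvBE.star a))) := mt_mono hdiv a hbc
  have h5 : mt a (jn d (InvBE.star a)) = mt a d := by
    rw [jn_comm]; exact P hdiv a d
  rw [h5] at h4
  exact le_antisymm (le_trans h4 (le_mt_right hdiv a d)) hdle

/-- dual distributivity: `(x ⊓ y) ⊔ z = (x ⊔ z) ⊓ (y ⊔ z)` -/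
lemma FH' (x y z : X) : jn (mt x y) z = mt (jn x z) (jn y z) := by
  apply star_inj
  rw [star_jn, star_mt, star_mt, star_jn, star_jn, mt_comm (jn (InvBE.star x) (InvBE.star y)),
    FH hdiv, mt_comm (InvBE.star z) (InvBE.star x), mt_comm (InvBE.star z) (InvBE.star y)]

lemma idis1 (x y z : X) : Idis1 x y z := by
  unfold Idis1
  have lhs : InvBE.star (imp (imp (InvBE.star x) y) (InvBE.star z)) = mt (jn x y) z := rfl
  have rhs : imp (imp x (InvBE.star z)) (InvBE.star (imp y (InvBE.star z))) = jn (mt x z) (mt y z) := by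
    rw [imp_eq_jn (imp x (InvBE.star z))]; rfl
  rw [lhs, rhs, mt_comm, FH hdiv, mt_comm z x, mt_comm z y]

lemma idis2 (x y z : X) : Idis2 x y z := by
  unfold Idis2
  have lhs : InvBE.star (imp (imp x (InvBE.star y)) z) = InvBE.star (jn (mt x y) z) := by
    rw [imp_eq_jn (imp x (InvBE.star y))]; rfl
  have rhs : imp (imp (InvBE.star z) x) (InvBE.star (imp (InvBE.star z) y)) = InvBE.star (mt (jn z x) (jn z y)) := by
    show imp (jn z x) (InvBE.star (jn z y)) = _
    unfold mt; rw [ss]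
  rw [lhs, rhs]
  apply congrArg InvBE.star
  rw [FH' hdiv, jn_comm x z, jn_comm y z]

end

end IOMLProof

theorem stmt18 {X : Type*} [IOML X] :
    (∀ x y z : X, DistribTriple x y z) ↔ (∀ x y : X, imp x (star (imp x y)) = imp x (star y)) := by
  constructor
  · intro h x y
    have E := (h x (star y) (star x)).2.2.2.2.2.2.1
    unfold Idis2 at E
    rw [IOMLProof.ss, IOMLProof.ss, InvBE.imp_self, InvBE.one_imp] at E
    have E2 : imp (imp x y) (star x) = imp x (star y) := IOMLProof.star_inj E
    calc imp x (star (imp x y)) = imp (imp x y) (star x) := InvBE.exch x (imp x y) zero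
      _ = imp x (star y) := E2
  · intro hdiv x y z
    exact ⟨IOMLProof.idis1 hdiv x y z, IOMLProof.idis1 hdiv x z y, IOMLProof.idis1 hdiv y x z,
      IOMLProof.idis1 hdiv y z x, IOMLProof.idis1 hdiv z x y, IOMLProof.idis1 hdiv z y x,
      IOMLProof.idis2 hdiv x y z, IOMLProof.idis2 hdiv x z y, IOMLProof.idis2 hdiv y x z,
      IOMLProof.idis2 hdiv y z x, IOMLProof.idis2 hdiv z x y, IOMLProof.idis2 hdiv z y x⟩
end
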